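/- Let h be a positive integer, m + 1 = 100·h, and write (x_0X)^m = Σ_{j=0}^m a_jX^j with a_j ∈ A(100·h − 1). Then there exists an index i > (3/4)(m+1) such that a_i ∉ B_1 while a_j ∈ B_1 for all j with i < j ≤ m. -/

import Mathlib

noncomputable section

/-- `A¹`: the free unital associative algebra over `K` on generators `x_0, x_1, x_2, …`,
realized as the monoid algebra of the free monoid on `ℕ`.  The free *non-unital*
algebra `A` sits inside it as the span of the monomials of positive length. -/
abbrev FA (K : Type) [Field K] : Type := MonoidAlgebra K (FreeMonoid ℕ)

/-- The monomial `x_{i₁} x_{i₂} ⋯ x_{iₙ}` corresponding to the list `[i₁, …, iₙ]`. -/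
def mon (K : Type) [Field K] (l : List ℕ) : FA K :=
  MonoidAlgebra.single (FreeMonoid.ofList l) 1

/-- The generator `x_i`. -/
def xg (K : Type) [Field K] (i : ℕ) : FA K := mon K [i]

/-- `A(n)`: the `K`-linear span of the monomials of length `n`. -/
def Agr (K : Type) [Field K] (n : ℕ) : Submodule K (FA K) :=
  Submodule.span K {a | ∃ l : List ℕ, l.length = n ∧ a = mon K l}

/-- The free non-unital algebra `A`: the span of monomials of positive length. -/
def Apos (K : Type) [Field K] : Submodule K (FA K) :=
  Submodule.span K {a | ∃ l : List ℕ, l ≠ [] ∧ a = mon K l}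

/-- `D` is the `K`-derivation with `D(x_i) = x_{i+1}` for every `i`. -/
def IsDer (K : Type) [Field K] (D : FA K →ₗ[K] FA K) : Prop :=
  (∀ a b : FA K, D (a * b) = D a * b + a * D b) ∧ ∀ i : ℕ, D (xg K i) = xg K (i + 1)

/-- `W(k, n, t)`:  `W(k,n,0)` is the set of monomials of length `n` in the letters
`x_0, …, x_{k-1}`, and `W(k,n,t+1) = D(W(k,n,t))`. -/
def WsetL (K : Type) [Field K] (D : FA K →ₗ[K] FA K) (k n : ℕ) : ℕ → Set (FA K)
  | 0 => {a | ∃ l : List ℕ, l.length = n ∧ (∀ i ∈ l, i < k) ∧ a = mon K l}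
  | t + 1 => D '' WsetL K D k n t

/-- `W(k, n) = ⋃ₜ W(k, n, t)`. -/
def Wset (K : Type) [Field K] (D : FA K →ₗ[K] FA K) (k n : ℕ) : Set (FA K) :=
  ⋃ t, WsetL K D k n t

/-- `I_k`: the two-sided ideal of `A` generated by `W(k, 2·100^{k²})`. -/
def Ik (K : Type) [Field K] (D : FA K →ₗ[K] FA K) (k : ℕ) : Submodule K (FA K) :=
  Submodule.span K
    {a | ∃ u v w : FA K, w ∈ Wset K D k (2 * 100 ^ (k ^ 2)) ∧ a = u * w * v}

/-- `I = Σ_{k > 0} I_k`. -/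
def Itot (K : Type) [Field K] (D : FA K →ₗ[K] FA K) : Submodule K (FA K) :=
  ⨆ k : ℕ, ⨆ _ : 1 ≤ k, Ik K D k

/-- `W_k = Σ_{m ≥ 0} A(m·100^{k²}) · W(k, 100^{k²}) · A¹`. -/
def Wk (K : Type) [Field K] (D : FA K →ₗ[K] FA K) (k : ℕ) : Submodule K (FA K) :=
  Submodule.span K {a | ∃ (l : List ℕ) (w v : FA K),
    (∃ m : ℕ, l.length = m * 100 ^ (k ^ 2)) ∧ w ∈ Wset K D k (100 ^ (k ^ 2)) ∧
    a = mon K l * w * v}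

/-- The set `Z_k`.  Here the letter of a monomial `s` in (1-indexed) position
`j` is `l[j-1]?` for the corresponding list `l`. -/
def Zset (K : Type) [Field K] (k : ℕ) : Set (FA K) :=
  {a | (∃ (κ : K) (l : List ℕ) (p q : ℕ), p < q ∧ q ≤ k ∧
          l.length = 100 ^ (k ^ 2) - 1 ∧
          l[3 ^ p * 100 ^ ((k - 1) ^ 2) - 1]? = l[3 ^ q * 100 ^ ((k - 1) ^ 2) - 1]? ∧
          a = κ • mon K l) ∨
      (∃ (κ : K) (l₁ l₂ : List ℕ) (p q e₁ e₂ : ℕ), p < q ∧ q ≤ k ∧ e₂ < e₁ ∧ 0 < e₂ ∧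
          l₁.length = 100 ^ (k ^ 2) - 1 ∧ l₂.length = 100 ^ (k ^ 2) - 1 ∧
          l₁[3 ^ p * 100 ^ ((k - 1) ^ 2) - 1]? = some e₁ ∧
          l₁[3 ^ q * 100 ^ ((k - 1) ^ 2) - 1]? = some e₂ ∧
          l₂[3 ^ p * 100 ^ ((k - 1) ^ 2) - 1]? = some e₂ ∧
          l₂[3 ^ q * 100 ^ ((k - 1) ^ 2) - 1]? = some e₁ ∧
          (∀ j : ℕ, j + 1 ≠ 3 ^ p * 100 ^ ((k - 1) ^ 2) →
            j + 1 ≠ 3 ^ q * 100 ^ ((k - 1) ^ 2) → l₁[j]? = l₂[j]?) ∧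
          a = κ • (mon K l₁ + mon K l₂))}

/-- `B_k = Σ_{m ≥ 0} A(m·100^{k²}) · Z_k · A¹`. -/
def Bk (K : Type) [Field K] (k : ℕ) : Submodule K (FA K) :=
  Submodule.span K {a | ∃ (l : List ℕ) (z v : FA K),
    (∃ m : ℕ, l.length = m * 100 ^ (k ^ 2)) ∧ z ∈ Zset K k ∧ a = mon K l * z * v}

/-- `B_1 + B_2 + ⋯ + B_k`. -/
def Bsum (K : Type) [Field K] (k : ℕ) : Submodule K (FA K) :=
  ∑ i ∈ Finset.Icc 1 k, Bk K i

/-- The coefficients `a_j^{(m)}` of `(x_0 X)^m = Σ_j a_j^{(m)} X^j` in `A¹[X; D]`: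
`a_0^{(0)} = 1`, `a_j^{(0)} = 0` for `j > 0`, and
`a_j^{(m+1)} = x_0 (a_{j-1}^{(m)} + D(a_j^{(m)}))` (with `a_{-1}^{(m)} = 0`). -/
def acoef (K : Type) [Field K] (D : FA K →ₗ[K] FA K) : ℕ → ℕ → FA K
  | 0, 0 => 1
  | 0, _ + 1 => 0
  | m + 1, 0 => xg K 0 * D (acoef K D m 0)
  | m + 1, j + 1 => xg K 0 * (acoef K D m j + D (acoef K D m (j + 1)))

/-!
In `(x₀X)^m` every `X` differentiates at most one of the letters to its right, so the
coefficient of `x_{s₁} ⋯ x_{sₘ}` in `a_j` is the number `derivCount 0 s` of ways to distribute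
the derivations, provided `Σ sᵢ + j = m`. Each monomial occurring in an element of `Z₁` has equal
first and third letters, or two nonzero ones; hence every element of `B₁` has coefficient zero
at a monomial in which, in each block of 100 letters, exactly one of the first and third letters
is `x₀`. Put a single letter `x_a` in each block `r`, at offset `o_r ∈ {0, 2}`, and `x₀`
elsewhere: its coefficient in `a_{m - ha}` is `∏_r C(r(100 - a) + o_r, a)`. For `a = 1` this is
`∏_r (99r + o_r)`, prime to the characteristic `p ≠ 2` when `o_r = 2` exactly for `p ∣ 99r`; in
characteristic 2 take `a = 2` and alternate the offsets, which makes every `C(98r + o_r, 2)` odd.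
As `a ≤ 2`, the index `m - ha` exceeds `3(m + 1)/4`, and the largest `i ≤ m` with `a_i ∉ B₁` is
the required one.
-/

open Finset

section SumLower

variable {M N : Type*} [AddCommMonoid M] [AddCommMonoid N]

/-- `sumLower F t = ∑ F u` over the lists `u` obtained from `t` by lowering one positive
entry by one. -/
def sumLower (F : List ℕ → M) : List ℕ → M
  | [] => 0
  | 0 :: t => sumLower (fun u => F (0 :: u)) t
  | (e + 1) :: t => F (e :: t) + sumLower (fun u => F ((e + 1) :: u)) t

theorem sumLower_add (F G : List ℕ → M) (t : List ℕ) :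
    sumLower (fun u => F u + G u) t = sumLower F t + sumLower G t := by
  induction t generalizing F G with
  | nil => simp [sumLower]
  | cons e t ih =>
    rcases e with _ | e
    · exact ih _ _
    · simp only [sumLower, ih]
      abel

@[simp]
theorem sumLower_zero (t : List ℕ) : sumLower (fun _ => (0 : M)) t = 0 := by
  induction t with
  | nil => rfl
  | cons e t ih => rcases e with _ | e <;> simpa [sumLower] using ih

theorem map_sumLower (g : M →+ N) (F : List ℕ → M) (t : List ℕ) :
    g (sumLower F t) = sumLower (g ∘ F) t := by
  induction t generalizing F with
  | nil => simp [sumLower]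
  | cons e t ih =>
    rcases e with _ | e
    · exact ih _
    · simp only [sumLower, map_add, ih]
      rfl

theorem sumLower_mul_left {R : Type*} [NonUnitalNonAssocSemiring R] (c : R)
    (F : List ℕ → R) (t : List ℕ) : sumLower (fun u => c * F u) t = c * sumLower F t :=
  (map_sumLower (AddMonoidHom.mulLeft c) F t).symm

theorem sumLower_congr {F G : List ℕ → M} {t : List ℕ}
    (h : ∀ u, u.length = t.length → u.sum + 1 = t.sum → F u = G u) :
    sumLower F t = sumLower G t := by
  induction t generalizing F G with
  | nil => rfl
  | cons e t ih =>
    have htail : ∀ u, u.length = t.length → u.sum + 1 = t.sum → F (e :: u) = G (e :: u) :=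
      fun u hl hs => h _ (by simp [hl]) (by simp; omega)
    rcases e with _ | e
    · exact ih htail
    · simp only [sumLower]
      rw [h _ (by simp) (by simp; omega), ih htail]

end SumLower

/-- The ways for the letters of `s` to take their derivations from the `X`s to their left when `d`
of these are still unused: the letter `x_e` takes `e` of them, and each letter brings one more. -/
def derivCount : ℕ → List ℕ → ℕ
  | _, [] => 1
  | d, e :: s => d.choose e * derivCount (d + 1 - e) s

theorem derivCount_eq_zero_of_lt {d : ℕ} {s : List ℕ} (h : d + s.length < s.sum) :
    derivCount d s = 0 := by
  induction s generalizing d with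
  | nil => simp at h
  | cons e s ih =>
    simp only [List.length_cons, List.sum_cons] at h
    rcases le_or_gt e d with he | he
    · simp [derivCount, ih (show d + 1 - e + s.length < s.sum by omega)]
    · simp [derivCount, Nat.choose_eq_zero_of_lt he]

theorem derivCount_succ (d : ℕ) (s : List ℕ) :
    derivCount (d + 1) s = derivCount d s + sumLower (derivCount d) s := by
  induction s generalizing d with
  | nil => rfl
  | cons e s ih =>
    rcases e with _ | e
    · simp only [derivCount, sumLower, Nat.choose_zero_right, one_mul, Nat.sub_zero, ih]
    rcases lt_or_ge d e with hde | hde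
    · simp [derivCount, sumLower, Nat.choose_eq_zero_of_lt, hde,
        hde.trans (Nat.lt_succ_self e)]
    · obtain ⟨c, rfl⟩ := Nat.exists_eq_add_of_le hde
      simp only [derivCount, sumLower, sumLower_mul_left, Nat.choose_succ_succ', ih c,
        show e + c + 1 + 1 - (e + 1) = c + 1 by omega, show e + c + 1 - (e + 1) = c by omega,
        show e + c + 1 - e = c + 1 by omega]
      ring

theorem derivCount_append (d : ℕ) (l r : List ℕ) :
    derivCount d (l ++ r) = derivCount d l * derivCount (d + l.length - l.sum) r := by
  induction l generalizing d with
  | nil => simp [derivCount]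
  | cons e l ih =>
    simp only [List.cons_append, derivCount, ih, List.length_cons, List.sum_cons, mul_assoc]
    rcases le_or_gt e (d + 1) with he | he
    · rw [show d + 1 - e + l.length - l.sum = d + (l.length + 1) - (e + l.sum) by omega]
    · simp [Nat.choose_eq_zero_of_lt (show d < e by omega)]

theorem derivCount_replicate_zero (d k : ℕ) : derivCount d (List.replicate k 0) = 1 := by
  induction k generalizing d with
  | zero => rfl
  | succ k ih => simp [List.replicate_succ, derivCount, ih]

section FreeAlgebra

variable {K : Type} [Field K]

theorem mon_append (l w : List ℕ) : mon K (l ++ w) = mon K l * mon K w := by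
  simp only [mon, MonoidAlgebra.single_mul_single, one_mul]
  rfl

theorem mon_cons (a : ℕ) (l : List ℕ) : mon K (a :: l) = xg K a * mon K l :=
  mon_append [a] l

theorem mon_nil : mon K [] = 1 := rfl

theorem coeff_mon (l u : List ℕ) :
    (mon K l).coeff (FreeMonoid.ofList u) = if l = u then 1 else 0 := by
  classical
  simp [mon, MonoidAlgebra.coeff_single, Finsupp.single_apply]

theorem coeff_xg_mul_nil (a : ℕ) (g : FA K) : (xg K a * g).coeff (FreeMonoid.ofList []) = 0 :=
  MonoidAlgebra.coeff_single_mul_of_forall_mul_ne _ _ fun d h => by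
    simpa using congrArg FreeMonoid.toList h

theorem coeff_xg_mul_cons (a e : ℕ) (t : List ℕ) (g : FA K) :
    (xg K a * g).coeff (FreeMonoid.ofList (e :: t)) =
      if a = e then g.coeff (FreeMonoid.ofList t) else 0 := by
  split_ifs with h
  · subst h
    exact (MonoidAlgebra.coeff_single_mul_mul g 1 (FreeMonoid.of a) _).trans (one_mul _)
  · exact MonoidAlgebra.coeff_single_mul_of_forall_mul_ne _ _ fun d hd => h <| by
      simpa using congrArg List.head? (congrArg FreeMonoid.toList hd)

theorem isPrefix_of_coeff_mon_mul_ne_zero {l s : List ℕ} {v : FA K}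
    (h : (mon K l * v).coeff (FreeMonoid.ofList s) ≠ 0) : l <+: s := by
  induction l generalizing s with
  | nil => exact List.nil_prefix
  | cons a l ih =>
    rcases s with _ | ⟨e, s⟩
    · rw [mon_cons, mul_assoc, coeff_xg_mul_nil] at h
      exact absurd rfl h
    · rw [mon_cons, mul_assoc, coeff_xg_mul_cons] at h
      split_ifs at h with hae
      · exact hae ▸ (List.prefix_cons_inj a).mpr (ih h)
      · exact absurd rfl h

end FreeAlgebra

namespace IsDer

variable {K : Type} [Field K] {D : FA K →ₗ[K] FA K}

theorem map_one (hD : IsDer K D) : D 1 = 0 := by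
  simpa using hD.1 1 1

theorem map_xg_mul (hD : IsDer K D) (a : ℕ) (g : FA K) :
    D (xg K a * g) = xg K (a + 1) * g + xg K a * D g := by
  rw [hD.1, hD.2]

theorem coeff_map_mon (hD : IsDer K D) (l t : List ℕ) :
    (D (mon K l)).coeff (FreeMonoid.ofList t) =
      sumLower (fun u => (mon K l).coeff (FreeMonoid.ofList u)) t := by
  induction l generalizing t with
  | nil =>
    rw [mon_nil, hD.map_one]
    rcases t with _ | ⟨e, t⟩
    · rfl
    · rw [MonoidAlgebra.coeff_zero, Finsupp.coe_zero, Pi.zero_apply, eq_comm]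
      refine (sumLower_congr fun u hu _ => ?_).trans (sumLower_zero _)
      rw [← mon_nil, coeff_mon, if_neg]
      rintro rfl
      simp at hu
  | cons a l ih =>
    rw [mon_cons, hD.map_xg_mul]
    rcases t with _ | ⟨e, t⟩
    · rw [MonoidAlgebra.coeff_add, Finsupp.add_apply, coeff_xg_mul_nil, coeff_xg_mul_nil,
        add_zero]
      rfl
    · have sumLower_ite (P : Prop) [Decidable P] (F : List ℕ → K) :
          sumLower (fun u => if P then F u else 0) t = if P then sumLower F t else 0 := by
        split_ifs <;> simp
      rcases e with _ | e <;>
        simp only [sumLower, MonoidAlgebra.coeff_add, Finsupp.add_apply, coeff_xg_mul_cons, ih,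
          sumLower_ite] <;> split_ifs <;> simp_all

theorem coeff_map (hD : IsDer K D) (f : FA K) (t : List ℕ) :
    (D f).coeff (FreeMonoid.ofList t) = sumLower (fun u => f.coeff (FreeMonoid.ofList u)) t := by
  induction f using MonoidAlgebra.induction_linear with
  | zero => simp
  | add f g hf hg =>
    simp only [map_add, MonoidAlgebra.coeff_add, Finsupp.add_apply, hf, hg, sumLower_add]
  | single a b =>
    have hs : MonoidAlgebra.single a b = b • mon K (FreeMonoid.toList a) := by
      rw [mon, MonoidAlgebra.smul_single', mul_one]
      rfl
    simp only [hs, map_smul, MonoidAlgebra.coeff_smul, Finsupp.smul_apply, smul_eq_mul,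
      hD.coeff_map_mon, sumLower_mul_left]

theorem coeff_map_of_coeff_eq_derivCount (hD : IsDer K D) {f : FA K} {n j : ℕ}
    (hf : ∀ u, f.coeff (FreeMonoid.ofList u) =
      if u.length = n ∧ u.sum + j = n then (derivCount 0 u : K) else 0) (t : List ℕ) :
    (D f).coeff (FreeMonoid.ofList t) =
      if t.length = n ∧ t.sum + j = n + 1 then (derivCount 1 t - derivCount 0 t : K) else 0 := by
  have hlower : sumLower (fun u => f.coeff (FreeMonoid.ofList u)) t = sumLower
      (fun u => if t.length = n ∧ t.sum + j = n + 1 then (derivCount 0 u : K) else 0) t :=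
    sumLower_congr fun u hl hs => by
      rw [hf, hl]
      exact if_congr (by omega) rfl rfl
  rw [hD.coeff_map, hlower]
  split_ifs
  · rw [derivCount_succ, Nat.cast_add, add_sub_cancel_left]
    exact (map_sumLower (Nat.castAddMonoidHom K) _ t).symm
  · exact sumLower_zero t

theorem coeff_acoef (hD : IsDer K D) (n j : ℕ) (s : List ℕ) :
    (acoef K D n j).coeff (FreeMonoid.ofList s) =
      if s.length = n ∧ s.sum + j = n then (derivCount 0 s : K) else 0 := by
  induction n generalizing j s with
  | zero =>
    rcases j with _ | j
    · rw [show acoef K D 0 0 = mon K [] from rfl, coeff_mon]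
      rcases s <;> simp [derivCount]
    · simp [acoef]
  | succ n ih =>
    have hDcoeff := fun j => hD.coeff_map_of_coeff_eq_derivCount (ih j)
    rcases s with _ | ⟨e, t⟩
    · rcases j <;> simp only [acoef, coeff_xg_mul_nil] <;> simp
    obtain rfl | he := eq_or_ne e 0
    · have hcons (j : ℕ) : (if (0 :: t).length = n + 1 ∧ (0 :: t).sum + j = n + 1 then
            (derivCount 0 (0 :: t) : K) else 0) =
          if t.length = n ∧ t.sum + j = n + 1 then (derivCount 1 t : K) else 0 := by
        simp [derivCount]
      rcases j with _ | j
      · simp only [acoef, coeff_xg_mul_cons, if_true, hDcoeff 0, hcons]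
        split_ifs with ht
        · rw [derivCount_eq_zero_of_lt (d := 0) (by omega), Nat.cast_zero, sub_zero]
        · rfl
      · have hcond :
            t.length = n ∧ t.sum + (j + 1) = n + 1 ↔ t.length = n ∧ t.sum + j = n := by
          omega
        simp only [acoef, coeff_xg_mul_cons, if_true, MonoidAlgebra.coeff_add, Finsupp.add_apply,
          ih, hDcoeff, hcons, hcond]
        split_ifs <;> ring
    · rcases j <;> simp only [acoef, coeff_xg_mul_cons, if_neg he.symm, derivCount,
        Nat.choose_eq_zero_of_lt (Nat.pos_of_ne_zero he), zero_mul, Nat.cast_zero, ite_self]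

end IsDer

def BlockZeroXor (s : List ℕ) : Prop :=
  ∀ r, 100 * r + 99 ≤ s.length → Xor (s[100 * r]? = some 0) (s[100 * r + 2]? = some 0)

section BOne

variable {K : Type} [Field K]

theorem coeff_mon_mul_mon_mul_eq_zero {s l w : List ℕ} {n : ℕ} (hs : BlockZeroXor s)
    (hl : l.length = 100 * n) (hw : w.length = 99) (hwx : ¬Xor (w[0]? = some 0) (w[2]? = some 0))
    (v : FA K) :
    (mon K l * mon K w * v).coeff (FreeMonoid.ofList s) = 0 := by
  by_contra hne
  rw [← mon_append] at hne
  obtain ⟨u, rfl⟩ := isPrefix_of_coeff_mon_mul_ne_zero hne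
  have hget (c : ℕ) (hc : c < 99) : (l ++ w ++ u)[100 * n + c]? = w[c]? := by
    rw [List.append_assoc, List.getElem?_append_right (by omega), hl, Nat.add_sub_cancel_left,
      List.getElem?_append_left (by omega)]
  apply hwx
  rw [← hget 0 (by norm_num), ← hget 2 (by norm_num)]
  exact hs n (by simp [hl, hw])

theorem coeff_eq_zero_of_mem_Bk_one {s : List ℕ} (hs : BlockZeroXor s) {x : FA K}
    (hx : x ∈ Bk K 1) : x.coeff (FreeMonoid.ofList s) = 0 := by
  induction hx using Submodule.span_induction with
  | mem x hx =>
    obtain ⟨l, z, v, ⟨n, hl⟩, hz, rfl⟩ := hx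
    replace hl : l.length = 100 * n := by rw [hl]; ring
    rcases hz with ⟨κ, w, p, q, hpq, hq, hw, hww, rfl⟩ | ⟨κ, w₁, w₂, p, q, e₁, e₂, hpq, hq, he,
      he₂, hw₁, hw₂, h₁p, h₁q, h₂p, h₂q, -, rfl⟩
    · obtain ⟨rfl, rfl⟩ : p = 0 ∧ q = 1 := by omega
      norm_num at hw hww
      rw [mul_smul_comm, smul_mul_assoc, MonoidAlgebra.coeff_smul, Finsupp.smul_apply,
        coeff_mon_mul_mon_mul_eq_zero hs hl hw (by simp [hww]) v, smul_zero]
    · obtain ⟨rfl, rfl⟩ : p = 0 ∧ q = 1 := by omega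
      norm_num at hw₁ hw₂ h₁p h₁q h₂p h₂q
      have hpos {w : List ℕ} {b c : ℕ} (hb : w[0]? = some b) (hc : w[2]? = some c) (hb0 : 0 < b)
          (hc0 : 0 < c) : ¬Xor (w[0]? = some 0) (w[2]? = some 0) := by
        simp [Xor, hb, hc]
        omega
      rw [mul_smul_comm, smul_mul_assoc, mul_add, add_mul, MonoidAlgebra.coeff_smul,
        Finsupp.smul_apply, MonoidAlgebra.coeff_add, Finsupp.add_apply,
        coeff_mon_mul_mon_mul_eq_zero hs hl hw₁ (hpos h₁p h₁q (by omega) he₂) v,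
        coeff_mon_mul_mon_mul_eq_zero hs hl hw₂ (hpos h₂p h₂q he₂ (by omega)) v, add_zero,
        smul_zero]
  | zero => rfl
  | add x y _ _ hx hy => rw [MonoidAlgebra.coeff_add, Finsupp.add_apply, hx, hy, add_zero]
  | smul c x _ hx => rw [MonoidAlgebra.coeff_smul, Finsupp.smul_apply, hx, smul_zero]

end BOne

section Blocks

def block (o a : ℕ) : List ℕ := List.replicate o 0 ++ a :: List.replicate (99 - o) 0

def blocks (off : ℕ → ℕ) (a : ℕ) : ℕ → List ℕ
  | 0 => []
  | n + 1 => blocks off a n ++ block (off n) a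

theorem length_block {o : ℕ} (ho : o < 100) (a : ℕ) : (block o a).length = 100 := by
  simp [block]
  omega

theorem sum_block (o a : ℕ) : (block o a).sum = a := by
  simp [block]

theorem getElem?_block {o c : ℕ} (ho : o < 100) (hc : c < 100) (a : ℕ) :
    (block o a)[c]? = some (if o = c then a else 0) := by
  rcases lt_trichotomy c o with hco | rfl | hoc
  · rw [block, List.getElem?_append_left (by simpa using hco), List.getElem?_replicate,
      if_pos hco, if_neg hco.ne']
  · simp [block]
  · rw [block, List.getElem?_append_right (by simp; omega), List.length_replicate,
      show c - o = c - o - 1 + 1 by omega, List.getElem?_cons_succ, List.getElem?_replicate,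
      if_pos (by omega), if_neg hoc.ne]

theorem derivCount_block (d o a : ℕ) : derivCount d (block o a) = (d + o).choose a := by
  simp [block, derivCount_append, derivCount, derivCount_replicate_zero]

variable {off : ℕ → ℕ} {a : ℕ}

theorem length_blocks (hoff : ∀ r, off r < 100) (n : ℕ) :
    (blocks off a n).length = 100 * n := by
  induction n with
  | zero => rfl
  | succ n ih => rw [blocks, List.length_append, ih, length_block (hoff n)]; ring

theorem sum_blocks (n : ℕ) : (blocks off a n).sum = n * a := by
  induction n with
  | zero => simp [blocks]
  | succ n ih => rw [blocks, List.sum_append, ih, sum_block]; ring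

theorem getElem?_blocks (hoff : ∀ r, off r < 100) {n r c : ℕ} (hr : r < n) (hc : c < 100) :
    (blocks off a n)[100 * r + c]? = some (if off r = c then a else 0) := by
  induction n with
  | zero => omega
  | succ n ih =>
    rw [blocks]
    rcases Nat.lt_succ_iff_lt_or_eq.mp hr with hr | rfl
    · rw [List.getElem?_append_left (by rw [length_blocks hoff]; omega), ih hr]
    · rw [List.getElem?_append_right (by rw [length_blocks hoff]; omega), length_blocks hoff,
        Nat.add_sub_cancel_left, getElem?_block (hoff r) hc]

theorem derivCount_blocks (hoff : ∀ r, off r < 100) (n : ℕ) :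
    derivCount 0 (blocks off a n) = ∏ r ∈ range n, (r * (100 - a) + off r).choose a := by
  induction n with
  | zero => rfl
  | succ n ih =>
    rw [blocks, derivCount_append, ih, derivCount_block, length_blocks hoff, sum_blocks,
      prod_range_succ, zero_add, Nat.mul_sub, mul_comm n 100]

theorem blocks_succ_eq_dropLast_append {n : ℕ} (hoff : off n < 99) :
    blocks off a (n + 1) = (blocks off a (n + 1)).dropLast ++ [0] := by
  rw [blocks, block, show 99 - off n = 98 - off n + 1 by omega, List.replicate_succ',
    ← List.cons_append, ← List.append_assoc, ← List.append_assoc, List.dropLast_concat]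

end Blocks

theorem blockZeroXor_of_blocks_eq_append {off : ℕ → ℕ} {a n : ℕ} {s l : List ℕ}
    (hoff : ∀ r, off r = 0 ∨ off r = 2) (ha : 0 < a) (hs : blocks off a n = s ++ l) :
    BlockZeroXor s := by
  have hoff100 : ∀ r, off r < 100 := fun r => by rcases hoff r with h | h <;> omega
  have hlen : s.length ≤ 100 * n := by
    have := congrArg List.length hs
    rw [length_blocks hoff100, List.length_append] at this
    omega
  intro r hr
  have hget (c : ℕ) (hc : c < 99) : s[100 * r + c]? = some (if off r = c then a else 0) := by
    rw [← List.getElem?_append_left (l₂ := l) (by omega), ← hs,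
      getElem?_blocks hoff100 (by omega) (by omega)]
  have hget0 := hget 0 (by norm_num)
  rw [Nat.add_zero] at hget0
  rw [hget0, hget 2 (by norm_num)]
  rcases hoff r with h | h <;> simp [h, Xor, ha.ne']

theorem IsDer.acoef_not_mem_Bk_one {K : Type} [Field K] {D : FA K →ₗ[K] FA K} (hD : IsDer K D)
    {m h a : ℕ} {off : ℕ → ℕ} (hm : m + 1 = 100 * h) (hha : h * a ≤ m) (ha : 0 < a)
    (hoff : ∀ r, off r = 0 ∨ off r = 2)
    (hprod : ((∏ r ∈ range h, (r * (100 - a) + off r).choose a : ℕ) : K) ≠ 0) :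
    acoef K D m (m - h * a) ∉ Bk K 1 := by
  obtain ⟨n, rfl⟩ : ∃ n, h = n + 1 := ⟨h - 1, by omega⟩
  have hoff99 : ∀ r, off r < 99 := fun r => by rcases hoff r with h | h <;> omega
  set s := (blocks off a (n + 1)).dropLast
  have hs : blocks off a (n + 1) = s ++ [0] := blocks_succ_eq_dropLast_append (hoff99 n)
  have hlen : s.length = m := by
    have := congrArg List.length hs
    simp only [length_blocks (fun r => (hoff99 r).trans (by norm_num)), List.length_append,
      List.length_singleton] at this
    omega
  have hsum : s.sum = (n + 1) * a := by simpa [sum_blocks] using (congrArg List.sum hs).symm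
  have hcount : derivCount 0 s = ∏ r ∈ range (n + 1), (r * (100 - a) + off r).choose a := by
    rw [← derivCount_blocks (fun r => (hoff99 r).trans (by norm_num)), hs, derivCount_append]
    simp [derivCount]
  intro hmem
  apply hprod
  have hcoeff := hD.coeff_acoef m (m - (n + 1) * a) s
  rw [if_pos ⟨hlen, by omega⟩] at hcoeff
  rw [← hcount, ← hcoeff]
  exact coeff_eq_zero_of_mem_Bk_one (blockZeroXor_of_blocks_eq_append hoff ha hs) hmem

theorem odd_choose_two_of_mod_four {n : ℕ} (hn : n % 4 = 2) : Odd (n.choose 2) := by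
  obtain ⟨u, rfl⟩ : ∃ u, n = 4 * u + 2 := ⟨n / 4, by omega⟩
  have : (4 * u + 2).choose 2 = (2 * u + 1) * (4 * u + 1) := by
    rw [Nat.choose_two_right, show 4 * u + 2 - 1 = 4 * u + 1 by omega,
      Nat.div_eq_of_eq_mul_left two_pos]
    ring
  rw [this]
  exact (odd_two_mul_add_one u).mul ⟨2 * u, by ring⟩

theorem exists_offsets_prod_choose_ne_zero (K : Type) [Field K] (h : ℕ) :
    ∃ (off : ℕ → ℕ) (a : ℕ), 0 < a ∧ a ≤ 2 ∧ (∀ r, off r = 0 ∨ off r = 2) ∧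
      ((∏ r ∈ range h, (r * (100 - a) + off r).choose a : ℕ) : K) ≠ 0 := by
  by_cases hK : ringChar K = 2
  · refine ⟨fun r => if r % 2 = 0 then 2 else 0, 2, two_pos, le_rfl,
      fun r => by dsimp only; split_ifs <;> simp, ?_⟩
    rw [Nat.cast_prod, prod_ne_zero_iff]
    intro r _
    rw [Ne, ringChar.spec, hK, ← even_iff_two_dvd, Nat.not_even_iff_odd]
    exact odd_choose_two_of_mod_four (by dsimp only; split_ifs <;> omega)
  · refine ⟨fun r => if ringChar K ∣ r * 99 then 2 else 0, 1, one_pos, one_le_two,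
      fun r => by dsimp only; split_ifs <;> simp, ?_⟩
    rw [Nat.cast_prod, prod_ne_zero_iff]
    intro r _
    dsimp only
    rw [Nat.choose_one_right, Ne, ringChar.spec]
    split_ifs with hr
    · intro hr2
      have h2 : ringChar K ∣ 2 := (Nat.dvd_add_right hr).mp hr2
      rcases CharP.char_is_prime_or_zero K (ringChar K) with hp | h0
      · exact hK ((Nat.prime_dvd_prime_iff_eq hp Nat.prime_two).mp h2)
      · simp [h0] at h2
    · simpa using hr

theorem x0X_coeff_not_in_B1_general (K : Type) [Field K] (D : FA K →ₗ[K] FA K) (hD : IsDer K D)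
    (h m : ℕ) (hm : m + 1 = 100 * h) :
    ∃ i ≤ m, 3 * (m + 1) < 4 * i ∧ acoef K D m i ∉ Bk K 1 ∧
      ∀ j, i < j → j ≤ m → acoef K D m j ∈ Bk K 1 := by
  classical
  obtain ⟨off, a, ha, ha2, hoff, hprod⟩ := exists_offsets_prod_choose_ne_zero K h
  have hha : h * a ≤ h * 2 := Nat.mul_le_mul_left h ha2
  have hj₀ : acoef K D m (m - h * a) ∉ Bk K 1 :=
    hD.acoef_not_mem_Bk_one hm (by omega) ha hoff hprod
  let P j := acoef K D m j ∉ Bk K 1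
  have hle : m - h * a ≤ Nat.findGreatest P m := Nat.le_findGreatest (Nat.sub_le m _) hj₀
  refine ⟨Nat.findGreatest P m, Nat.findGreatest_le m, by omega,
    Nat.findGreatest_spec (P := P) (Nat.sub_le m _) hj₀, fun j hij hjm => ?_⟩
  by_contra hj
  exact Nat.findGreatest_is_greatest hij hjm hj

/-- Lemma 7: if `m + 1 = 100·h` and `(x_0X)^m = Σ_j a_j X^j` with `a_j ∈ A(100·h − 1)`,
then there is `i > (3/4)(m+1)` with `a_i ∉ B_1` and `a_j ∈ B_1` for all `i < j ≤ m`. -/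
theorem x0X_coeff_not_in_B1 (K : Type) [Field K] (D : FA K →ₗ[K] FA K) (hD : IsDer K D)
    (h m : ℕ) (hh : 0 < h) (hm : m + 1 = 100 * h)
    (hA : ∀ j ≤ m, acoef K D m j ∈ Agr K (100 * h - 1)) :
    ∃ i ≤ m, 3 * (m + 1) < 4 * i ∧ acoef K D m i ∉ Bk K 1 ∧
      ∀ j, i < j → j ≤ m → acoef K D m j ∈ Bk K 1 :=
  x0X_coeff_not_in_B1_general K D hD h m hm
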